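/- Let G be a connected graph on n vertices such that |B| < n/4 for every block B ∈ 𝓑(G), and let T_𝓑 be a reduced block tree of G. Then there exist a vertex B* ∈ V(T_𝓑) and a colouring φ : V(T_𝓑) \ {B*} → {red, blue} such that every connected component of T_𝓑 − B* is monochromatic, and, setting S_red = {v ∈ B \ B* : B ∈ 𝓑(G), φ(B) = red} and S_blue = {v ∈ B \ B* : B ∈ 𝓑(G), φ(B) = blue}, it holds that |S_blue| ≤ |S_red| ≤ 3|S_blue|. -/

import Mathlib

/-- `B` satisfies the defining property of a block: for any two distinct vertices
`x, y ∈ B` with `xy ∉ E(G)`, one cannot separate `x` from `y` by removing fewer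
than 2 vertices (i.e. after deleting any set `S` of fewer than 2 vertices avoiding
`x` and `y`, `x` and `y` are still joined by a path). -/
def BlockProp {V : Type*} (G : SimpleGraph V) (B : Set V) : Prop :=
  ∀ x ∈ B, ∀ y ∈ B, x ≠ y → ¬ G.Adj x y →
    ∀ S : Set V, S.ncard < 2 → ∀ (hx : x ∉ S) (hy : y ∉ S),
      (G.induce Sᶜ).Reachable ⟨x, hx⟩ ⟨y, hy⟩

/-- The block decomposition `𝓑(G)`: the maximal vertex sets satisfying `BlockProp`. -/
def blocks {V : Type*} (G : SimpleGraph V) : Set (Set V) :=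
  {B | Maximal (fun A => BlockProp G A) B}

/-- The block graph `G_𝓑`: vertices are the blocks of `G`, two distinct blocks
being adjacent iff they intersect. -/
def blockGraph {V : Type*} (G : SimpleGraph V) : SimpleGraph ↥(blocks G) where
  Adj A B := A ≠ B ∧ ((A : Set V) ∩ (B : Set V)).Nonempty
  symm := by
    constructor
    rintro A B ⟨h1, h2⟩
    exact ⟨h1.symm, by rwa [Set.inter_comm]⟩
  loopless := ⟨fun A h => h.1 rfl⟩

/-- The vertices of `G` lying in some block of colour `c` (other than `B*`),
excluding the vertices of `B*` itself. -/
def colourClass {V : Type*} (G : SimpleGraph V) (Bs : ↥(blocks G))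
    (φ : ↥(blocks G) → Bool) (c : Bool) : Set V :=
  {x | ∃ A : ↥(blocks G), A ≠ Bs ∧ φ A = c ∧ x ∈ (A : Set V) ∧ x ∉ (Bs : Set V)}

/-!
Distinct blocks meet in at most one vertex, and a cycle of at least two blocks glued along
pairwise distinct vertices would itself satisfy the block property. Hence every block on a path
of `T` between two blocks containing a vertex `x` contains `x`, so for any block `B*` the
components (branches) of `T - B*` partition `V ∖ B*`. Taking `B*` to be a centroid, i.e.
minimising the largest branch, every branch has at most `n/2 < 3|V ∖ B*|/4` vertices, since
`|B*| < n/4`. A greedy choice of branches then gives a red part with between a half and three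
quarters of `V ∖ B*`.
-/

namespace Finset

variable {ι : Type*} [DecidableEq ι]

theorem exists_subset_le_sum_le (s : Finset ι) (f : ι → ℕ) {M t : ℕ} (hf : ∀ i ∈ s, f i ≤ M)
    (ht : t ≤ ∑ i ∈ s, f i) : ∃ P ⊆ s, t ≤ ∑ i ∈ P, f i ∧ ∑ i ∈ P, f i ≤ t + M := by
  induction s using Finset.induction with
  | empty => exact ⟨∅, subset_rfl, by simpa using ht, by simp⟩
  | insert a s ha ih =>
    rw [sum_insert ha] at ht
    by_cases hts : t ≤ ∑ i ∈ s, f i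
    · obtain ⟨P, hPs, h₁, h₂⟩ := ih (fun i hi => hf i (mem_insert_of_mem hi)) hts
      exact ⟨P, hPs.trans (subset_insert a s), h₁, h₂⟩
    · have := hf a (mem_insert_self a s)
      exact ⟨insert a s, subset_rfl, by rw [sum_insert ha]; omega, by rw [sum_insert ha]; omega⟩

theorem exists_subset_balanced (s : Finset ι) (f : ι → ℕ)
    (hf : ∀ i ∈ s, 4 * f i ≤ 3 * ∑ j ∈ s, f j) :
    ∃ P ⊆ s, ∑ i ∈ s, f i ≤ 2 * ∑ i ∈ P, f i ∧ 4 * ∑ i ∈ P, f i ≤ 3 * ∑ i ∈ s, f i := by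
  set W := ∑ i ∈ s, f i
  obtain ⟨P, hPs, hP₁, hP₂⟩ : ∃ P ⊆ s, W ≤ 4 * ∑ i ∈ P, f i ∧ 4 * ∑ i ∈ P, f i ≤ 3 * W := by
    by_cases hbig : ∃ i ∈ s, W ≤ 4 * f i
    · obtain ⟨i, hi, hWi⟩ := hbig
      exact ⟨{i}, singleton_subset_iff.2 hi, by simpa using hWi, by simpa using hf i hi⟩
    · push Not at hbig
      obtain ⟨P, hPs, h₁, h₂⟩ := exists_subset_le_sum_le s (fun i => 4 * f i) (M := W) (t := W)
        (fun i hi => (hbig i hi).le) (by rw [← mul_sum]; omega)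
      rw [← mul_sum] at h₁ h₂
      exact ⟨P, hPs, h₁, by omega⟩
  have hsplit := sum_sdiff hPs (f := f)
  by_cases hhalf : W ≤ 2 * ∑ i ∈ P, f i
  · exact ⟨P, hPs, hhalf, hP₂⟩
  · exact ⟨s \ P, sdiff_subset, by omega, by omega⟩

end Finset

namespace SimpleGraph

variable {W : Type*} {Γ : SimpleGraph W}

theorem Reachable.exists_walk_of_induce {s : Set W} {a b : s} (h : (Γ.induce s).Reachable a b) :
    ∃ w : Γ.Walk a b, ∀ x ∈ w.support, x ∈ s := by
  obtain ⟨w⟩ := h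
  refine ⟨w.map (Embedding.induce s).toHom, fun x hx => ?_⟩
  obtain ⟨y, -, rfl⟩ := List.mem_map.1 ((Walk.support_map _ w) ▸ hx)
  exact y.2

theorem Connected.exists_adj_reachable_induce_ne (hc : Γ.Connected) {b A : W} (hA : A ≠ b) :
    ∃ D, ∃ hD : D ≠ b, Γ.Adj D b ∧ (Γ.induce {X | X ≠ b}).Reachable ⟨A, hA⟩ ⟨D, hD⟩ := by
  obtain ⟨w⟩ := hc.preconnected A b
  induction w with
  | nil => exact absurd rfl hA
  | @cons u y b hadj q ih =>
    by_cases hy : y = b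
    · subst hy
      exact ⟨u, hA, hadj, .rfl⟩
    · obtain ⟨D, hD, hDb, hreach⟩ := ih hy
      exact ⟨D, hD, hDb, (show (Γ.induce {X | X ≠ b}).Adj ⟨u, hA⟩ ⟨y, hy⟩ from hadj).reachable.trans
        hreach⟩

/-- For an edge `Db` of a tree, every other vertex lies on exactly one side of it. -/
theorem IsTree.reachable_induce_ne_iff (hT : Γ.IsTree) {b D A : W} (hadj : Γ.Adj D b)
    (hA : A ≠ b) (hAD : A ≠ D) :
    (Γ.induce {X | X ≠ b}).Reachable ⟨A, hA⟩ ⟨D, hadj.ne⟩ ↔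
      ¬ (Γ.induce {X | X ≠ D}).Reachable ⟨A, hAD⟩ ⟨b, hadj.ne'⟩ := by
  classical
  constructor
  · -- the two walks would join to a walk from `D` to `b` avoiding the bridge `Db`
    rintro h₁ h₂
    obtain ⟨w₁, hw₁⟩ := h₁.exists_walk_of_induce
    obtain ⟨w₂, hw₂⟩ := h₂.exists_walk_of_induce
    have hbridge :=
      isAcyclic_iff_forall_isBridge.1 hT.isAcyclic (show s(D, b) ∈ Γ.edgeSet from hadj)
    rw [isBridge_iff_forall_walk_mem_edges] at hbridge
    have hmem := hbridge (w₁.reverse.append w₂)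
    rw [Walk.edges_append, List.mem_append, Walk.edges_reverse, List.mem_reverse] at hmem
    rcases hmem with h | h
    · exact hw₁ b (w₁.snd_mem_support_of_mem_edges h) rfl
    · exact hw₂ D (w₂.fst_mem_support_of_mem_edges h) rfl
  · intro hnr
    let p := (hT.connected.preconnected A b).some.toPath
    by_cases hD : D ∈ (p : Γ.Walk A b).support
    · exact ⟨((p : Γ.Walk A b).takeUntil D hD).induce {X | X ≠ b} fun X hX (hXb : X = b) =>
        Walk.endpoint_notMem_support_takeUntil p.2 hD hadj.ne' (hXb ▸ hX)⟩
    · exact absurd ⟨(p : Γ.Walk A b).induce {X | X ≠ D} fun X hX (hXD : X = D) => hD (hXD ▸ hX)⟩ hnr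

end SimpleGraph

namespace BlockProp

variable {V : Type*} {G : SimpleGraph V}

theorem reachable {B : Set V} (hB : BlockProp G B) {x y : V} (hx : x ∈ B) (hy : y ∈ B)
    {S : Set V} (hS : S.ncard < 2) (hxS : x ∉ S) (hyS : y ∉ S) :
    (G.induce Sᶜ).Reachable ⟨x, hxS⟩ ⟨y, hyS⟩ := by
  rcases eq_or_ne x y with rfl | hne
  · rfl
  by_cases hadj : G.Adj x y
  · exact SimpleGraph.Adj.reachable (by exact hadj)
  · exact hB x hx y hy hne hadj S hS hxS hyS

theorem singleton (x : V) : BlockProp G {x} := by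
  rintro a rfl b rfl hab
  exact absurd rfl hab

theorem pair {x y : V} (h : G.Adj x y) : BlockProp G {x, y} := by
  rintro a ha b hb hab hnadj
  rcases ha with rfl | rfl <;> rcases hb with rfl | rfl
  exacts [absurd rfl hab, absurd h hnadj, absurd h.symm hnadj, absurd rfl hab]

theorem reachable_of_chain {P : ℕ → Set V} (hP : ∀ i, BlockProp G (P i)) {z : ℕ → V}
    {a b : ℕ} (hab : a ≤ b) (hz : ∀ i, a ≤ i → i < b → z i ∈ P i ∩ P (i + 1))
    {S : Set V} (hS : S.ncard < 2) (hzS : ∀ i, a ≤ i → i < b → z i ∉ S)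
    {u v : V} (hu : u ∈ P a) (hv : v ∈ P b) (huS : u ∉ S) (hvS : v ∉ S) :
    (G.induce Sᶜ).Reachable ⟨u, huS⟩ ⟨v, hvS⟩ := by
  induction b, hab using Nat.le_induction generalizing v with
  | base => exact (hP a).reachable hu hv hS huS hvS
  | succ b hab ih =>
    have hzb := hz b hab b.lt_succ_self
    have hzbS := hzS b hab b.lt_succ_self
    exact (ih (fun i hi hib => hz i hi (hib.trans b.lt_succ_self))
      (fun i hi hib => hzS i hi (hib.trans b.lt_succ_self)) hzb.1 hzbS).trans
      ((hP (b + 1)).reachable hzb.2 hv hS hzbS hvS)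

theorem iUnion_of_cycle [Finite V] {m : ℕ} {P : ℕ → Set V} (hP : ∀ i, BlockProp G (P i))
    {z : ℕ → V} (hz : ∀ i < m, z i ∈ P i ∩ P (i + 1)) {x : V} (hx : x ∈ P m ∩ P 0)
    (hinj : Set.InjOn z (Set.Iio m)) (hzx : ∀ i < m, z i ≠ x) :
    BlockProp G (⋃ i ≤ m, P i) := by
  -- Removing one vertex blocks at most one of the two arcs of the cycle.
  have arcs : ∀ a b, a ≤ b → b ≤ m → ∀ S : Set V, S.ncard < 2 →
      ∀ u ∈ P a, ∀ v ∈ P b, ∀ (huS : u ∉ S) (hvS : v ∉ S),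
      (G.induce Sᶜ).Reachable ⟨u, huS⟩ ⟨v, hvS⟩ := by
    intro a b hab hbm S hS u hu v hv huS hvS
    by_cases hfwd : ∀ i, a ≤ i → i < b → z i ∉ S
    · exact reachable_of_chain hP hab (fun i _ hi => hz i (by omega)) hS hfwd hu hv huS hvS
    push Not at hfwd
    obtain ⟨k, hak, hkb, hkS⟩ := hfwd
    have hS1 : ∀ y ∈ S, y = z k := fun y hy =>
      (Set.ncard_le_one_iff (Set.toFinite S)).1 (by omega) hy hkS
    have hxS : x ∉ S := fun h => hzx k (by omega) (hS1 x h).symm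
    have hzS : ∀ i < m, i ≠ k → z i ∉ S := fun i hi hik h =>
      hik (hinj (by simpa using hi) (by simpa using (by omega : k < m)) (hS1 _ h))
    have h₁ := reachable_of_chain hP a.zero_le (fun i _ hi => hz i (by omega)) hS
      (fun i _ hi => hzS i (by omega) (by omega)) hx.2 hu hxS huS
    have h₂ := reachable_of_chain hP hbm (fun i _ hi => hz i hi) hS
      (fun i hi hi' => hzS i hi' (by omega)) hv hx.1 hvS hxS
    exact h₁.symm.trans h₂.symm
  intro u hu v hv _ _ S hS huS hvS
  simp only [Set.mem_iUnion] at hu hv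
  obtain ⟨a, ha, hua⟩ := hu
  obtain ⟨b, hb, hvb⟩ := hv
  rcases le_total a b with hab | hba
  · exact arcs a b hab hb S hS u hua v hvb huS hvS
  · exact (arcs b a hba ha S hS v hvb u hua hvS huS).symm

end BlockProp

section Blocks

variable {V : Type*} {G : SimpleGraph V}

theorem exists_mem_blocks_superset [Finite V] {A : Set V} (hA : BlockProp G A) :
    ∃ B ∈ blocks G, A ⊆ B := by
  obtain ⟨B, hB, hmax⟩ := Set.Finite.exists_maximalFor id {C | BlockProp G C ∧ A ⊆ C}
    (Set.toFinite _) ⟨A, hA, le_rfl⟩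
  exact ⟨B, ⟨hB.1, fun C hC hBC => hmax ⟨hC, hB.2.trans hBC⟩ hBC⟩, hB.2⟩

theorem nonempty_of_mem_blocks [Nonempty V] {B : Set V} (hB : B ∈ blocks G) : B.Nonempty := by
  obtain ⟨x⟩ := ‹Nonempty V›
  by_contra hempty
  rw [Set.not_nonempty_iff_eq_empty] at hempty
  subst hempty
  exact hB.2 (BlockProp.singleton x) (Set.empty_subset _) rfl

theorem one_lt_ncard_of_mem_blocks [Finite V] [Nontrivial V] (hG : G.Connected) {B : Set V}
    (hB : B ∈ blocks G) : 1 < B.ncard := by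
  obtain ⟨x, hx⟩ := nonempty_of_mem_blocks hB
  obtain ⟨y, hxy⟩ := hG.preconnected.exists_adj_of_nontrivial x
  by_contra! h
  have hBx : B ⊆ {x, y} := fun z hz => Or.inl ((Set.ncard_le_one (Set.toFinite B)).1 h z hz x hx)
  have hy : y ∈ B := hB.2 (BlockProp.pair hxy) hBx (by simp)
  exact hxy.ne ((Set.ncard_le_one (Set.toFinite B)).1 h x hx y hy)

theorem eq_of_mem_blocks_of_subset {A C U : Set V} (hA : A ∈ blocks G) (hC : C ∈ blocks G)
    (hU : BlockProp G U) (hAU : A ⊆ U) (hCU : C ⊆ U) : A = C :=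
  (hAU.trans (hC.2 hU hCU)).antisymm (hCU.trans (hA.2 hU hAU))

theorem not_injOn_of_cycle [Finite V] {m : ℕ} (hm : 1 ≤ m) (P : ℕ → blocks G)
    (hinj : Set.InjOn P (Set.Iic m)) {z : ℕ → V} (hz : ∀ i < m, z i ∈ (P i : Set V) ∩ P (i + 1))
    {x : V} (hx : x ∈ (P m : Set V) ∩ P 0) (hzx : ∀ i < m, z i ≠ x) :
    ¬ Set.InjOn z (Set.Iio m) := by
  intro hzinj
  have hunion := BlockProp.iUnion_of_cycle (fun i => (P i).2.1) hz hx hzinj hzx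
  have hsub : ∀ i ≤ m, (P i : Set V) ⊆ ⋃ i ≤ m, (P i : Set V) :=
    fun i hi t ht => Set.mem_iUnion₂.2 ⟨i, hi, ht⟩
  have h01 := eq_of_mem_blocks_of_subset (P 0).2 (P 1).2 hunion (hsub 0 (Nat.zero_le m)) (hsub 1 hm)
  exact zero_ne_one (hinj (by simp) (by simpa using hm) (Subtype.ext h01))

theorem inter_subsingleton_of_mem_blocks [Finite V] {A C : Set V} (hA : A ∈ blocks G)
    (hC : C ∈ blocks G) (hAC : A ≠ C) : (A ∩ C).Subsingleton := by
  intro x hx y hy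
  by_contra hxy
  let P : ℕ → blocks G := fun i => if i = 1 then ⟨C, hC⟩ else ⟨A, hA⟩
  refine not_injOn_of_cycle le_rfl P ?_ (z := fun _ => y) ?_ (x := x) ⟨hx.2, hx.1⟩
    (fun _ _ => Ne.symm hxy) ?_
  · intro i hi j hj hij
    simp only [Set.mem_Iic] at hi hj
    interval_cases i <;> interval_cases j <;> simp_all [P]
  · intro i hi
    obtain rfl : i = 0 := by omega
    exact ⟨hy.1, hy.2⟩
  · intro i hi j hj _
    simp only [Set.mem_Iio] at hi hj
    omega

end Blocks

section Chains

variable {V : Type*} {G : SimpleGraph V} {x : V}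

theorem exists_chain_skip {m i j : ℕ} (P : ℕ → blocks G) (hinj : Set.InjOn P (Set.Iic m))
    (hconn : ∀ k < m, ((P k : Set V) ∩ P (k + 1)).Nonempty) (hij : i < j) (hjm : j < m)
    (hskip : ((P i : Set V) ∩ P (j + 1)).Nonempty) :
    ∃ Q : ℕ → blocks G, Set.InjOn Q (Set.Iic (m - (j - i))) ∧
      (∀ l < m - (j - i), ((Q l : Set V) ∩ Q (l + 1)).Nonempty) ∧
      Q 0 = P 0 ∧ Q (m - (j - i)) = P m ∧
      ∀ l, 0 < l → l < m - (j - i) → ∃ k, 0 < k ∧ k < m ∧ Q l = P k := by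
  set d := j - i
  let σ : ℕ → ℕ := fun l => if l ≤ i then l else l + d
  refine ⟨P ∘ σ, ?_, ?_, by simp [σ], by simp [σ, show ¬ m - d ≤ i by omega,
    show m - d + d = m by omega], fun l hl hlm => ⟨σ l, ?_, ?_, rfl⟩⟩
  · intro a ha b hb hab
    simp only [Set.mem_Iic] at ha hb
    have := hinj (by simp only [σ, Set.mem_Iic]; split_ifs <;> omega)
      (by simp only [σ, Set.mem_Iic]; split_ifs <;> omega) hab
    simp only [σ] at this
    split_ifs at this <;> omega
  · intro l hl
    rcases lt_trichotomy l i with h | rfl | h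
    · simpa [σ, h.le, Nat.succ_le_of_lt h] using hconn l (by omega)
    · have hσl : σ (l + 1) = j + 1 := by simp only [σ]; split_ifs <;> omega
      simpa only [Function.comp, show σ l = l from if_pos le_rfl, hσl] using hskip
    · simpa [σ, show ¬ l ≤ i by omega, show ¬ l + 1 ≤ i by omega,
        show l + 1 + d = l + d + 1 by omega] using hconn (l + d) (by omega)
  all_goals simp only [σ]; split_ifs <;> omega

theorem exists_mem_interior_of_chain [Finite V] (m : ℕ) (hm : 2 ≤ m) (P : ℕ → blocks G)
    (hinj : Set.InjOn P (Set.Iic m)) (hconn : ∀ i < m, ((P i : Set V) ∩ P (i + 1)).Nonempty)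
    (h0 : x ∈ (P 0 : Set V)) (hm' : x ∈ (P m : Set V)) :
    ∃ l, 0 < l ∧ l < m ∧ x ∈ (P l : Set V) := by
  induction m using Nat.strong_induction_on generalizing P with
  | _ m IH =>
  -- If no interior block contains `x`, the connectors avoid `x`, two of them coincide by
  -- `not_injOn_of_cycle`, and skipping the blocks between them gives a shorter such chain.
  by_contra! hint
  obtain ⟨z, hz⟩ : ∃ z : ℕ → V, ∀ i < m, z i ∈ (P i : Set V) ∩ P (i + 1) :=
    ⟨fun i => if h : i < m then (hconn i h).some else x,
      fun i hi => by simpa only [dif_pos hi] using (hconn i hi).some_mem⟩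
  have hzx : ∀ i < m, z i ≠ x := by
    intro i hi hzi
    rcases lt_or_eq_of_le (Nat.succ_le_of_lt hi) with h | h
    · exact hint (i + 1) i.succ_pos h (hzi ▸ (hz i hi).2)
    · exact hint i (by omega) hi (hzi ▸ (hz i hi).1)
  obtain ⟨i, j, hij, hjm, hzij⟩ : ∃ i j, i < j ∧ j < m ∧ z i = z j := by
    have := not_injOn_of_cycle (by omega) P hinj hz ⟨hm', h0⟩ hzx
    simp only [Set.InjOn, Set.mem_Iio, not_forall] at this
    obtain ⟨a, ha, b, hb, hab, hne⟩ := this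
    rcases lt_or_gt_of_ne hne with h | h
    exacts [⟨a, b, h, hb, hab⟩, ⟨b, a, h, ha, hab.symm⟩]
  have hskip : z i ∈ (P i : Set V) ∩ P (j + 1) := ⟨(hz i (by omega)).1, hzij ▸ (hz j hjm).2⟩
  by_cases hends : i = 0 ∧ j = m - 1
  · obtain ⟨rfl, rfl⟩ := hends
    have hP0m : P 0 ≠ P m := fun h => absurd (hinj (by simp) (by simp) h) (by omega)
    rw [Nat.sub_add_cancel (by omega : 1 ≤ m)] at hskip
    exact hzx 0 (by omega) (inter_subsingleton_of_mem_blocks (P 0).2 (P m).2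
      (fun h => hP0m (Subtype.ext h)) hskip ⟨h0, hm'⟩)
  obtain ⟨Q, hQinj, hQconn, hQ0, hQm, hQint⟩ := exists_chain_skip P hinj hconn hij hjm ⟨_, hskip⟩
  obtain ⟨l, hl, hlm, hxl⟩ := IH (m - (j - i)) (by omega) (by omega) Q hQinj hQconn
    (hQ0 ▸ h0) (hQm ▸ hm')
  obtain ⟨k, hk, hkm, hQk⟩ := hQint l hl hlm
  exact hint k hk hkm (hQk ▸ hxl)

theorem mem_of_chain [Finite V] (m : ℕ) (P : ℕ → blocks G) (hinj : Set.InjOn P (Set.Iic m))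
    (hconn : ∀ i < m, ((P i : Set V) ∩ P (i + 1)).Nonempty)
    (h0 : x ∈ (P 0 : Set V)) (hm : x ∈ (P m : Set V)) : ∀ k ≤ m, x ∈ (P k : Set V) := by
  induction m using Nat.strong_induction_on generalizing P with
  | _ m IH =>
  intro k hk
  rcases Nat.lt_or_ge m 2 with hm2 | hm2
  · rcases k.eq_zero_or_pos with rfl | hk0
    · exact h0
    · obtain rfl : k = m := by omega
      exact hm
  obtain ⟨l, hl0, hlm, hxl⟩ := exists_mem_interior_of_chain m hm2 P hinj hconn h0 hm
  rcases le_total k l with hkl | hlk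
  · exact IH l hlm P (hinj.mono (Set.Iic_subset_Iic.2 hlm.le))
      (fun i hi => hconn i (by omega)) h0 hxl k hkl
  have hshift : Set.InjOn (fun i => P (l + i)) (Set.Iic (m - l)) := by
    intro a ha b hb hab
    simp only [Set.mem_Iic] at ha hb
    have := hinj (by simp only [Set.mem_Iic]; omega) (by simp only [Set.mem_Iic]; omega) hab
    omega
  have := IH (m - l) (by omega) (fun i => P (l + i)) hshift
    (fun i hi => by simpa [add_assoc] using hconn (l + i) (by omega))
    (by simpa using hxl) (by rwa [Nat.add_sub_cancel' hlm.le]) (k - l) (by omega)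
  rwa [Nat.add_sub_cancel' hlk] at this

end Chains

section ReducedBlockTree

variable {V : Type*} [Finite V] {G : SimpleGraph V} {T : SimpleGraph (blocks G)}

theorem mem_of_mem_support_of_isPath (hT : T ≤ blockGraph G) {A C : blocks G} {p : T.Walk A C}
    (hp : p.IsPath) {x : V} (hxA : x ∈ (A : Set V)) (hxC : x ∈ (C : Set V)) :
    ∀ D ∈ p.support, x ∈ (D : Set V) := by
  intro D hD
  obtain ⟨k, rfl, hk⟩ := SimpleGraph.Walk.mem_support_iff_exists_getVert.1 hD
  exact mem_of_chain p.length p.getVert hp.getVert_injOn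
    (fun i hi => (hT (p.adj_getVert_succ hi)).2) (by simpa using hxA) (by simpa using hxC) k hk

theorem reachable_induce_ne_of_mem (hT : T ≤ blockGraph G) (hconn : T.Connected)
    {Bs A C : blocks G} (hA : A ≠ Bs) (hC : C ≠ Bs) {x : V} (hxA : x ∈ (A : Set V))
    (hxC : x ∈ (C : Set V)) (hxBs : x ∉ (Bs : Set V)) :
    (T.induce {X | X ≠ Bs}).Reachable ⟨A, hA⟩ ⟨C, hC⟩ := by
  classical
  let p := (hconn.preconnected A C).some.toPath
  exact ⟨(p : T.Walk A C).induce {X | X ≠ Bs} fun D hD (hDBs : D = Bs) =>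
    hxBs (hDBs ▸ mem_of_mem_support_of_isPath hT p.2 hxA hxC D hD)⟩

end ReducedBlockTree

section Branches

open SimpleGraph

variable {V : Type*} {G : SimpleGraph V} (T : SimpleGraph (blocks G)) (Bs : blocks G)

def branchSet (c : (T.induce {X | X ≠ Bs}).ConnectedComponent) : Set V :=
  {x | x ∉ (Bs : Set V) ∧ ∃ A ∈ c.supp, x ∈ (A.1 : Set V)}

noncomputable def branchWeight (c : (T.induce {X | X ≠ Bs}).ConnectedComponent) : ℕ :=
  (branchSet T Bs c).ncard

noncomputable instance [Finite V] : Fintype (T.induce {X | X ≠ Bs}).ConnectedComponent :=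
  Fintype.ofFinite _

noncomputable def maxBranchWeight [Finite V] : ℕ :=
  Finset.univ.sup (branchWeight T Bs)

variable [Finite V] {T Bs}

theorem branchWeight_le_maxBranchWeight (c : (T.induce {X | X ≠ Bs}).ConnectedComponent) :
    branchWeight T Bs c ≤ maxBranchWeight T Bs :=
  Finset.le_sup (Finset.mem_univ c)

theorem disjoint_branchSet (hT : T ≤ blockGraph G) (hconn : T.Connected)
    {c c' : (T.induce {X | X ≠ Bs}).ConnectedComponent} (hcc' : c ≠ c') :
    Disjoint (branchSet T Bs c) (branchSet T Bs c') := by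
  rw [Set.disjoint_left]
  rintro x ⟨hxBs, A, rfl, hxA⟩ ⟨-, A', rfl, hxA'⟩
  exact hcc' (ConnectedComponent.sound
    (reachable_induce_ne_of_mem hT hconn A.2 A'.2 hxA hxA' hxBs))

theorem iUnion_branchSet : ⋃ c, branchSet T Bs c = (Bs : Set V)ᶜ := by
  ext x
  simp only [Set.mem_iUnion, Set.mem_compl_iff]
  refine ⟨fun ⟨_, hx, _⟩ => hx, fun hx => ?_⟩
  obtain ⟨B, hB, hxB⟩ := exists_mem_blocks_superset (BlockProp.singleton (G := G) x)
  have hBBs : (⟨B, hB⟩ : blocks G) ≠ Bs := fun h => hx (h ▸ hxB rfl)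
  exact ⟨_, hx, ⟨⟨B, hB⟩, hBBs⟩, rfl, hxB rfl⟩

theorem ncard_biUnion_branchSet (hT : T ≤ blockGraph G) (hconn : T.Connected)
    (s : Finset (T.induce {X | X ≠ Bs}).ConnectedComponent) :
    (⋃ c ∈ s, branchSet T Bs c).ncard = ∑ c ∈ s, branchWeight T Bs c := by
  simp only [branchWeight]
  rw [← finsum_mem_coe_finset, ← (s.finite_toSet).ncard_biUnion (fun _ _ => Set.toFinite _)
    (fun _ _ _ _ h => disjoint_branchSet hT hconn h)]
  simp

theorem sum_branchWeight_add_ncard (hT : T ≤ blockGraph G) (hconn : T.Connected) :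
    ∑ c, branchWeight T Bs c + (Bs : Set V).ncard = Nat.card V := by
  rw [← ncard_biUnion_branchSet hT hconn, ← Set.ncard_add_ncard_compl (Bs : Set V)]
  simp [iUnion_branchSet, add_comm]

end Branches

section Centroid

open SimpleGraph

variable {V : Type*} [Finite V] {G : SimpleGraph V} {T : SimpleGraph (blocks G)} {Bs : blocks G}

theorem disjoint_branchSet_of_adj (hT : T ≤ blockGraph G) (hTree : T.IsTree) {D : blocks G}
    (hadj : T.Adj D Bs) :
    Disjoint (branchSet T D ((T.induce {X | X ≠ D}).connectedComponentMk ⟨Bs, hadj.ne'⟩))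
      (branchSet T Bs ((T.induce {X | X ≠ Bs}).connectedComponentMk ⟨D, hadj.ne⟩)) := by
  rw [Set.disjoint_left]
  rintro x ⟨-, A, hA, hxA⟩ ⟨hxBs, A', hA', hxA'⟩
  have hABs : A.1 ≠ Bs := fun h => hxBs (h ▸ hxA)
  have hAD : (T.induce {X | X ≠ Bs}).Reachable ⟨A.1, hABs⟩ ⟨D, hadj.ne⟩ :=
    (reachable_induce_ne_of_mem hT hTree.connected hABs A'.2 hxA hxA' hxBs).trans
      (ConnectedComponent.exact hA')
  exact (hTree.reachable_induce_ne_iff hadj hABs A.2).1 hAD (ConnectedComponent.exact hA)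

theorem branchSet_subset_of_adj (hT : T ≤ blockGraph G) (hTree : T.IsTree) {D : blocks G}
    (hadj : T.Adj D Bs) {d : (T.induce {X | X ≠ D}).ConnectedComponent}
    (hd : d ≠ (T.induce {X | X ≠ D}).connectedComponentMk ⟨Bs, hadj.ne'⟩) :
    branchSet T D d ⊆
      branchSet T Bs ((T.induce {X | X ≠ Bs}).connectedComponentMk ⟨D, hadj.ne⟩) := by
  rintro x ⟨hxD, A, rfl, hxA⟩
  have hnr : ¬ (T.induce {X | X ≠ D}).Reachable A ⟨Bs, hadj.ne'⟩ :=
    fun h => hd (ConnectedComponent.sound h)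
  have hABs : A.1 ≠ Bs := fun h => hnr (by rw [show A = ⟨Bs, hadj.ne'⟩ from Subtype.ext h])
  have hxBs : x ∉ (Bs : Set V) := fun hxBs =>
    hnr (reachable_induce_ne_of_mem hT hTree.connected A.2 hadj.ne' hxA hxBs hxD)
  exact ⟨hxBs, ⟨A.1, hABs⟩,
    ConnectedComponent.sound ((hTree.reachable_induce_ne_iff hadj hABs A.2).2 hnr), hxA⟩

/-- If a branch at `B*` carries more than half of the vertices, moving `B*` one step into that
branch decreases the maximum branch weight. -/
theorem exists_maxBranchWeight_lt [Nontrivial V] (hG : G.Connected) (hT : T ≤ blockGraph G)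
    (hTree : T.IsTree) (hheavy : Nat.card V < 2 * maxBranchWeight T Bs) :
    ∃ D, maxBranchWeight T D < maxBranchWeight T Bs := by
  have hne : (Finset.univ : Finset (T.induce {X | X ≠ Bs}).ConnectedComponent).Nonempty := by
    by_contra h
    simp [maxBranchWeight, Finset.not_nonempty_iff_eq_empty.1 h] at hheavy
  obtain ⟨c₀, -, hc₀⟩ : ∃ c₀ ∈ Finset.univ, maxBranchWeight T Bs = branchWeight T Bs c₀ :=
    Finset.exists_mem_eq_sup _ hne _
  obtain ⟨A₀, hA₀⟩ := c₀.nonempty_supp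
  obtain ⟨D, hD, hadj, hreach⟩ := hTree.connected.exists_adj_reachable_induce_ne A₀.2
  have hc₀D : c₀ = (T.induce {X | X ≠ Bs}).connectedComponentMk ⟨D, hD⟩ :=
    hA₀.symm.trans (ConnectedComponent.sound hreach)
  subst hc₀D
  -- `D` shares at most one vertex with `B*`, so it has one outside `B*`
  obtain ⟨y, hyD, hyBs⟩ : ∃ y ∈ (D : Set V), y ∉ (Bs : Set V) := by
    by_contra! hDBs
    obtain ⟨a, b, ha, hb, hab⟩ :=
      (Set.one_lt_ncard_iff (Set.toFinite _)).1 (one_lt_ncard_of_mem_blocks hG D.2)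
    exact hab (inter_subsingleton_of_mem_blocks D.2 Bs.2 (fun h => hD (Subtype.ext h))
      ⟨ha, hDBs a ha⟩ ⟨hb, hDBs b hb⟩)
  refine ⟨D, (Finset.sup_lt_iff (by rw [Nat.bot_eq_zero]; omega)).2 fun d _ => ?_⟩
  rw [hc₀]
  by_cases hd : d = (T.induce {X | X ≠ D}).connectedComponentMk ⟨Bs, hadj.ne'⟩
  · subst hd
    have := Set.ncard_union_eq (disjoint_branchSet_of_adj hT hTree hadj)
    have := Set.ncard_le_card (branchSet T D ((T.induce {X | X ≠ D}).connectedComponentMk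
      ⟨Bs, hadj.ne'⟩) ∪ branchSet T Bs ((T.induce {X | X ≠ Bs}).connectedComponentMk ⟨D, hD⟩))
    simp only [branchWeight] at hc₀ ⊢
    omega
  · refine Set.ncard_lt_ncard ((Set.ssubset_iff_of_subset
      (branchSet_subset_of_adj hT hTree hadj hd)).2 ⟨y, ⟨hyBs, ⟨D, hD⟩, rfl, hyD⟩, ?_⟩)
    exact fun hy => hy.1 hyD

theorem exists_two_mul_maxBranchWeight_le [Nontrivial V] (hG : G.Connected)
    (hT : T ≤ blockGraph G) (hTree : T.IsTree) :
    ∃ Bs, 2 * maxBranchWeight T Bs ≤ Nat.card V := by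
  have := hTree.connected.nonempty
  obtain ⟨Bs, hBs⟩ := Finite.exists_min fun B => maxBranchWeight T B
  refine ⟨Bs, not_lt.1 fun h => ?_⟩
  obtain ⟨D, hD⟩ := exists_maxBranchWeight_lt hG hT hTree h
  exact (hBs D).not_gt hD

end Centroid

section Colouring

open SimpleGraph

variable {V : Type*} {G : SimpleGraph V} (T : SimpleGraph (blocks G)) (Bs : blocks G)

/-- The value at `B*` is arbitrary: colour classes ignore `B*`. -/
noncomputable def branchColouring (χ : (T.induce {X | X ≠ Bs}).ConnectedComponent → Bool) :
    blocks G → Bool :=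
  fun A => if h : A = Bs then true else χ ((T.induce {X | X ≠ Bs}).connectedComponentMk ⟨A, h⟩)

variable {T Bs}

theorem branchColouring_eq_of_reachable (χ : (T.induce {X | X ≠ Bs}).ConnectedComponent → Bool)
    {A C : blocks G} (hA : A ≠ Bs) (hC : C ≠ Bs)
    (h : (T.induce {X | X ≠ Bs}).Reachable ⟨A, hA⟩ ⟨C, hC⟩) :
    branchColouring T Bs χ A = branchColouring T Bs χ C := by
  simp only [branchColouring, dif_neg hA, dif_neg hC, ConnectedComponent.sound h]

theorem colourClass_branchColouring (χ : (T.induce {X | X ≠ Bs}).ConnectedComponent → Bool)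
    (c : Bool) :
    colourClass G Bs (branchColouring T Bs χ) c = ⋃ k ∈ {k | χ k = c}, branchSet T Bs k := by
  ext x
  simp only [colourClass, branchSet, Set.mem_iUnion, Set.mem_ofPred_eq]
  constructor
  · rintro ⟨A, hA, hχ, hxA, hxBs⟩
    refine ⟨_, ?_, hxBs, ⟨A, hA⟩, rfl, hxA⟩
    simpa [branchColouring, dif_neg hA] using hχ
  · rintro ⟨k, rfl, hxBs, A, rfl, hxA⟩
    exact ⟨A.1, A.2, by simp [branchColouring, dif_neg A.2], hxA, hxBs⟩

theorem ncard_colourClass_branchColouring [Finite V] (hT : T ≤ blockGraph G)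
    (hconn : T.Connected)
    (χ : (T.induce {X | X ≠ Bs}).ConnectedComponent → Bool) (c : Bool) :
    (colourClass G Bs (branchColouring T Bs χ) c).ncard =
      ∑ k with χ k = c, branchWeight T Bs k := by
  rw [colourClass_branchColouring, ← ncard_biUnion_branchSet hT hconn]
  simp

end Colouring

/-- If every block of a connected graph `G` on `n` vertices has fewer than `n/4`
vertices, then in any reduced block tree `T` there are a block `B*` and a
red/blue colouring of the remaining blocks such that every component of `T - B*`
is monochromatic and the corresponding vertex classes `S_red`, `S_blue` satisfy
`|S_blue| ≤ |S_red| ≤ 3|S_blue|`. -/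
theorem balanced_reduced_block_tree {V : Type*} [Fintype V] (G : SimpleGraph V)
    (hG : G.Connected)
    (hsmall : ∀ B ∈ blocks G, (B.ncard : ℝ) < (Fintype.card V : ℝ) / 4)
    (T : SimpleGraph ↥(blocks G)) (hT : T ≤ blockGraph G) (hTree : T.IsTree) :
    ∃ (Bs : ↥(blocks G)) (φ : ↥(blocks G) → Bool),
      (∀ (A C : ↥(blocks G)) (hA : A ≠ Bs) (hC : C ≠ Bs),
        (T.induce {X : ↥(blocks G) | X ≠ Bs}).Reachable ⟨A, hA⟩ ⟨C, hC⟩ → φ A = φ C) ∧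
      (colourClass G Bs φ false).ncard ≤ (colourClass G Bs φ true).ncard ∧
      (colourClass G Bs φ true).ncard ≤ 3 * (colourClass G Bs φ false).ncard := by
  have hquarter : ∀ B : blocks G, 4 * (B : Set V).ncard < Fintype.card V := fun B => by
    have := hsmall B B.2
    exact_mod_cast (by push_cast; linarith : ((4 * (B : Set V).ncard : ℕ) : ℝ) < Fintype.card V)
  obtain ⟨B₀⟩ := hTree.connected.nonempty
  have : Nonempty V := Fintype.card_pos_iff.1 (by have := hquarter B₀; omega)
  have : Nontrivial V := Fintype.one_lt_card_iff_nontrivial.1 (by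
    have := (Set.ncard_pos (Set.toFinite _)).2 (nonempty_of_mem_blocks B₀.2)
    have := hquarter B₀
    omega)
  obtain ⟨Bs, hBs⟩ := exists_two_mul_maxBranchWeight_le hG hT hTree
  have hsum := sum_branchWeight_add_ncard (Bs := Bs) hT hTree.connected
  rw [Nat.card_eq_fintype_card] at hBs hsum
  have := Classical.decEq (T.induce {X | X ≠ Bs}).ConnectedComponent
  obtain ⟨P, -, hP₁, hP₂⟩ := Finset.exists_subset_balanced Finset.univ (branchWeight T Bs)
    fun c _ => by have := branchWeight_le_maxBranchWeight c; have := hquarter Bs; omega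
  refine ⟨Bs, branchColouring T Bs (· ∈ P),
    fun A C hA hC => branchColouring_eq_of_reachable _ hA hC, ?_⟩
  have hsplit := Finset.sum_filter_add_sum_filter_not Finset.univ (· ∈ P) (branchWeight T Bs)
  simp only [ncard_colourClass_branchColouring hT hTree.connected, decide_eq_true_eq,
    decide_eq_false_iff_not]
  simp only [Finset.filter_mem_eq_inter, Finset.univ_inter] at hsplit ⊢
  constructor <;> omega
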